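/- Let p be an odd prime, f an odd positive integer, n a positive integer, and a an integer with a ≡ 1 (mod 4). Then C_p^{(2)}(a,f,n) = 2 if n is odd; C_p^{(2)}(a,f,n) = 4 if n is even and a ≡ 5 (mod 8); and C_p^{(2)}(a,f,n) = 0 otherwise. -/

import Mathlib

open scoped Classical

noncomputable section

/-- `D(m,n) := (m+1-n)^2 - 4m`. -/
def Dfun (m n : ℤ) : ℤ := (m + 1 - n) ^ 2 - 4 * m

/-- `C_p^{(ℓ)}(a,f,n)`: the number of units `m` modulo `ℓ^e`, where `e = ν_ℓ(4nf²)`,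
satisfying `D(p,m) ≡ a f² (mod ℓ^e)`. -/
def Cpl (p : ℕ) (a : ℤ) (f n ℓ : ℕ) : ℕ :=
  ((Finset.range (ℓ ^ ((4 * n * f ^ 2).factorization ℓ))).filter
    (fun m => Nat.Coprime m (ℓ ^ ((4 * n * f ^ 2).factorization ℓ)) ∧
      ((ℓ : ℤ) ^ ((4 * n * f ^ 2).factorization ℓ)) ∣
        (Dfun (p : ℤ) (m : ℤ) - a * (f : ℤ) ^ 2))).card

/-!
Substituting `t = p + 1 - m`, the congruence `D(p, m) ≡ a f² (mod 2^e)` becomes `t² ≡ c`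
with `c = 4p + a f²`, and since `c` is odd every solution is automatically a unit; so
`C_p^{(2)}(a,f,n)` counts the square roots of `c` modulo `2^e`, where `e = ν₂(n) + 2`.
As `c ≡ a + 4 (mod 8)`, for odd `n` these are the two units modulo `4`. For even `n` we have
`e ≥ 3`: there are none when `c ≡ 5 (mod 8)`, and when `c ≡ 1 (mod 8)` Hensel lifting gives an
odd root `w`, and `t² ≡ w² (mod 2^e)` iff `t ≡ ±w (mod 2^(e-1))`, two distinct classes each of
which has two lifts modulo `2^e`.
-/

open Finset

theorem Int.sq_emod_eight_eq_one_of_odd {x : ℤ} (hx : Odd x) : x ^ 2 % 8 = 1 := by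
  obtain ⟨k, rfl⟩ := hx
  obtain ⟨j, hj⟩ := Int.even_mul_succ_self k
  have : (2 * k + 1) ^ 2 = 8 * j + 1 := by linear_combination 4 * hj
  omega

theorem Int.four_mul_add_mul_sq_emod_eight {p a f : ℤ} (hp : Odd p) (hf : Odd f) :
    (4 * p + a * f ^ 2) % 8 = (a + 4) % 8 := by
  obtain ⟨i, rfl⟩ := hp
  obtain ⟨r, hr⟩ : ∃ r, f ^ 2 = 8 * r + 1 :=
    ⟨f ^ 2 / 8, by have := Int.sq_emod_eight_eq_one_of_odd hf; omega⟩
  have : 4 * (2 * i + 1) + a * f ^ 2 = 8 * (i + a * r) + (a + 4) := by rw [hr]; ring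
  omega

theorem Int.exists_odd_two_pow_dvd_sq_sub {c : ℤ} (hc : c % 8 = 1) (e : ℕ) :
    ∃ x : ℤ, Odd x ∧ 2 ^ e ∣ x ^ 2 - c := by
  suffices h : ∀ d, ∃ x : ℤ, Odd x ∧ 2 ^ (d + 3) ∣ x ^ 2 - c by
    obtain ⟨x, hx, hdvd⟩ := h e
    exact ⟨x, hx, (pow_dvd_pow 2 (by omega)).trans hdvd⟩
  intro d
  induction d with
  | zero => exact ⟨1, odd_one, by omega⟩
  | succ d ih =>
    obtain ⟨x, hx, k, hk⟩ := ih
    obtain ⟨u, hu⟩ := hx.add_one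
    refine ⟨x + 2 ^ (d + 2) * k, hx.add_even ((even_two.pow_of_ne_zero ?_).mul_right k), ?_⟩
    · omega
    -- `(x + 2^(d+2) k)² - c = 2^(d+3) k (1 + x) + 2^(2d+4) k²` and `1 + x = 2u`
    exact ⟨k * u + 2 ^ d * k ^ 2, by linear_combination hk + 2 ^ (d + 3) * k * hu⟩

theorem Int.two_pow_succ_dvd_sq_sub_sq_iff {x y : ℤ} (hy : Odd y) {e : ℕ} (he : e ≠ 0) :
    2 ^ (e + 1) ∣ x ^ 2 - y ^ 2 ↔ 2 ^ e ∣ x - y ∨ 2 ^ e ∣ x + y := by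
  obtain ⟨d, rfl⟩ : ∃ d, e = d + 1 := ⟨e - 1, by omega⟩
  rw [show x ^ 2 - y ^ 2 = (x - y) * (x + y) by ring]
  constructor
  · intro h
    have h2 : (2 : ℤ) ∣ (x - y) * (x + y) := (dvd_pow_self 2 (by omega)).trans h
    -- `x - y` and `x + y` differ by `2y`: both are even, and exactly one of their halves is odd
    obtain ⟨u, hu⟩ : 2 ∣ x - y := by
      rcases Int.prime_two.dvd_or_dvd h2 with h | h <;> omega
    obtain ⟨v, hv⟩ : 2 ∣ x + y := by omega
    have huv : 2 ^ d ∣ u * v := by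
      rw [hu, hv, show (2 : ℤ) ^ (d + 1 + 1) = 4 * 2 ^ d by ring,
        show 2 * u * (2 * v) = 4 * (u * v) by ring] at h
      exact (mul_dvd_mul_iff_left (by norm_num)).1 h
    rcases Int.even_or_odd u with hu_even | hu_odd
    · have hv_odd : ¬ 2 ∣ v := by rw [Int.even_iff] at hu_even; rw [Int.odd_iff] at hy; omega
      rw [hu, pow_succ']
      exact .inl (mul_dvd_mul_left 2 (Int.prime_two.pow_dvd_of_dvd_mul_right d hv_odd huv))
    · have hu_odd' : ¬ 2 ∣ u := by rw [Int.odd_iff] at hu_odd; omega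
      rw [hv, pow_succ']
      exact .inr (mul_dvd_mul_left 2 (Int.prime_two.pow_dvd_of_dvd_mul_left d hu_odd' huv))
  · rintro (⟨k, hk⟩ | ⟨k, hk⟩)
    · exact ⟨k * (y + 2 ^ d * k), by linear_combination (x + y + 2 ^ (d + 1) * k) * hk⟩
    · exact ⟨k * (2 ^ d * k - y), by linear_combination (x - y + 2 ^ (d + 1) * k) * hk⟩

theorem ZMod.card_filter_range_natCast (N : ℕ) [NeZero N] (P : ZMod N → Prop)
    [DecidablePred P] :
    #((range N).filter fun m : ℕ => P m) = #{x : ZMod N | P x} :=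
  card_nbij' (fun m : ℕ => (m : ZMod N)) ZMod.val (fun m hm => by simp_all)
    (fun x hx => by simp_all [ZMod.val_lt]) (fun m hm => ZMod.val_cast_of_lt (by simp_all))
    (fun x _ => ZMod.natCast_zmod_val x)

theorem ZMod.card_fiber_castHom_mul {m n : ℕ} [NeZero m] [NeZero n] (h : m ∣ n)
    (y : ZMod m) :
    #{t : ZMod n | castHom h (ZMod m) t = y} * m = n := by
  have hfiber (y' : ZMod m) :
      #{t : ZMod n | castHom h (ZMod m) t = y'} = #{t : ZMod n | castHom h (ZMod m) t = y} :=
    AddMonoidHom.card_fiber_eq_of_mem_range (castHom h (ZMod m))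
      (ZMod.ringHom_surjective _ y') (ZMod.ringHom_surjective _ y)
  calc _ = ∑ y' : ZMod m, #{t : ZMod n | castHom h (ZMod m) t = y'} := by
        rw [sum_congr rfl fun y' _ => hfiber y', sum_const, card_univ, ZMod.card, smul_eq_mul,
          mul_comm]
    _ = n := by
        rw [← card_eq_sum_card_fiberwise (fun t _ => mem_univ _), card_univ, ZMod.card]

theorem ZMod.sq_eq_intCast_sq_iff {e : ℕ} (he : e ≠ 0) {w : ℤ} (hw : Odd w)
    (t : ZMod (2 ^ (e + 1))) :
    t ^ 2 = (w : ZMod (2 ^ (e + 1))) ^ 2 ↔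
      castHom (pow_dvd_pow 2 e.le_succ) (ZMod (2 ^ e)) t = w ∨
        castHom (pow_dvd_pow 2 e.le_succ) (ZMod (2 ^ e)) t = -w := by
  obtain ⟨z, rfl⟩ := ZMod.intCast_surjective t
  simp only [map_intCast, ← Int.cast_pow, ← Int.cast_neg, ZMod.intCast_eq_intCast_iff_dvd_sub]
  push_cast
  rw [dvd_sub_comm, Int.two_pow_succ_dvd_sq_sub_sq_iff hw he, dvd_sub_comm,
    show -w - z = -(z + w) by ring, dvd_neg]

theorem ZMod.card_sq_eq_intCast_sq {e : ℕ} (he : 2 ≤ e) {w : ℤ} (hw : Odd w) :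
    #{t : ZMod (2 ^ (e + 1)) | t ^ 2 = (w : ZMod (2 ^ (e + 1))) ^ 2} = 4 := by
  set π := castHom (pow_dvd_pow 2 e.le_succ) (ZMod (2 ^ e))
  have hfiber (y : ZMod (2 ^ e)) : #{t : ZMod (2 ^ (e + 1)) | π t = y} = 2 :=
    Nat.eq_of_mul_eq_mul_right (by positivity)
      ((ZMod.card_fiber_castHom_mul _ y).trans (pow_succ' 2 e))
  have hne : (w : ZMod (2 ^ e)) ≠ -w := by
    rw [Ne, eq_neg_iff_add_eq_zero, ← Int.cast_add, ZMod.intCast_zmod_eq_zero_iff_dvd]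
    intro h
    have h4 : (4 : ℤ) ∣ 2 ^ e := by exact_mod_cast pow_dvd_pow 2 he
    push_cast at h
    obtain ⟨k, hk⟩ := h4.trans h
    rw [Int.odd_iff] at hw
    omega
  simp_rw [ZMod.sq_eq_intCast_sq_iff (by omega : e ≠ 0) hw, filter_or]
  rw [card_union_of_disjoint (disjoint_filter.2 fun t _ h1 h2 => hne (h1.symm.trans h2)),
    hfiber, hfiber]

theorem ZMod.card_sq_eq_intCast_of_emod_eight_eq_one {e : ℕ} (he : 3 ≤ e) {c : ℤ}
    (hc : c % 8 = 1) :
    #{t : ZMod (2 ^ e) | t ^ 2 = c} = 4 := by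
  obtain ⟨w, hw, hdvd⟩ := Int.exists_odd_two_pow_dvd_sq_sub hc e
  have hcw : (c : ZMod (2 ^ e)) = (w : ZMod (2 ^ e)) ^ 2 := by
    rw [← Int.cast_pow, ZMod.intCast_eq_intCast_iff_dvd_sub]
    exact_mod_cast hdvd
  obtain ⟨d, rfl⟩ : ∃ d, e = d + 1 := ⟨e - 1, by omega⟩
  rw [hcw]
  exact ZMod.card_sq_eq_intCast_sq (by omega) hw

theorem ZMod.card_sq_eq_intCast_of_emod_eight_eq_five {e : ℕ} (he : 3 ≤ e) {c : ℤ}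
    (hc : c % 8 = 5) :
    #{t : ZMod (2 ^ e) | t ^ 2 = c} = 0 := by
  rw [card_eq_zero, filter_eq_empty_iff]
  intro t _ ht
  have h8 := congrArg (castHom (pow_dvd_pow 2 he : 8 ∣ 2 ^ e) (ZMod 8)) ht
  rw [map_pow, map_intCast, ← ZMod.intCast_mod, show c % (8 : ℕ) = 5 by exact_mod_cast hc] at h8
  revert h8
  generalize castHom _ (ZMod 8) t = y
  decide +revert

theorem ZMod.card_sq_eq_intCast_of_emod_four_eq_one {c : ℤ} (hc : c % 4 = 1) :
    #{t : ZMod 4 | t ^ 2 = c} = 2 := by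
  rw [← ZMod.intCast_mod, show c % (4 : ℕ) = 1 by exact_mod_cast hc]
  decide

theorem factorization_two_four_mul_mul_sq {n f : ℕ} (hn : n ≠ 0) (hf : Odd f) :
    (4 * n * f ^ 2).factorization 2 = n.factorization 2 + 2 := by
  have hf2 : f.factorization 2 = 0 := Nat.factorization_eq_zero_of_not_dvd hf.not_two_dvd_nat
  rw [Nat.factorization_mul (by positivity) (pow_ne_zero 2 hf.pos.ne'),
    Nat.factorization_mul four_ne_zero hn, show (4 : ℕ) = 2 ^ 2 by norm_num,
    Nat.factorization_pow]
  simp [hf2, Nat.prime_two.factorization_self, add_comm]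

theorem Cpl_two_eq_card_sq {p : ℕ} (hp : Odd p) {a : ℤ} (ha : Odd a) {f : ℕ} (hf : Odd f)
    {n : ℕ} (hn : n ≠ 0) :
    Cpl p a f n 2 = #{t : ZMod (2 ^ (4 * n * f ^ 2).factorization 2) |
      t ^ 2 = ((4 * p + a * f ^ 2 : ℤ) : ZMod (2 ^ (4 * n * f ^ 2).factorization 2))} := by
  set E := (4 * n * f ^ 2).factorization 2
  set c : ℤ := 4 * p + a * f ^ 2
  have hE : E ≠ 0 :=
    (Nat.prime_two.factorization_pos_of_dvd
      (mul_ne_zero (mul_ne_zero four_ne_zero hn) (pow_ne_zero 2 hf.pos.ne'))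
      ⟨2 * n * f ^ 2, by ring⟩).ne'
  have hpred (m : ℕ) : (m.Coprime (2 ^ E) ∧ (2 : ℤ) ^ E ∣ Dfun p m - a * f ^ 2) ↔
      ((p : ZMod (2 ^ E)) + 1 - m) ^ 2 = c := by
    have hD : Dfun p m - a * f ^ 2 = (p + 1 - m) ^ 2 - c := by unfold Dfun; ring
    have hcast : ((p : ZMod (2 ^ E)) + 1 - m) ^ 2 = c ↔
        ((2 ^ E : ℕ) : ℤ) ∣ (p + 1 - m) ^ 2 - c := by
      rw [dvd_sub_comm, ← ZMod.intCast_eq_intCast_iff_dvd_sub]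
      push_cast
      rfl
    push_cast at hcast
    rw [hD, ← hcast, and_iff_right_iff_imp, Nat.coprime_pow_right_iff (Nat.pos_of_ne_zero hE),
      Nat.coprime_two_right]
    intro h
    -- modulo `2`: `c` is odd, so `p + 1 - m` is odd, while `p + 1` is even
    have h2 := (ZMod.intCast_zmod_eq_zero_iff_dvd _ 2).2 ((dvd_pow_self 2 hE).trans (hcast.1 h))
    push_cast [c, hp.natCast_zmod_two, hf.natCast_zmod_two, ZMod.intCast_eq_one_iff_odd.2 ha]
      at h2
    rw [← ZMod.natCast_eq_one_iff_odd]
    revert h2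
    generalize (m : ZMod 2) = y
    decide +revert
  unfold Cpl
  rw [Nat.cast_ofNat, filter_congr fun m _ => hpred m]
  exact (ZMod.card_filter_range_natCast _
      fun x => ((p : ZMod (2 ^ E)) + 1 - x) ^ 2 = (c : ZMod (2 ^ E))).trans
    (card_equiv (Equiv.subLeft ((p : ZMod (2 ^ E)) + 1)) (by simp))

theorem Cpl_at_two_general (p : ℕ) (hp : p.Prime) (hp2 : p ≠ 2)
    (f : ℕ) (hf : Odd f) (n : ℕ) (hn : 0 < n)
    (a : ℤ) (ha : a % 4 = 1) :
    (¬ (2 ∣ n) → Cpl p a f n 2 = 2) ∧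
    (2 ∣ n → a % 8 = 5 → Cpl p a f n 2 = 4) ∧
    (2 ∣ n → a % 8 ≠ 5 → Cpl p a f n 2 = 0) := by
  have hp_odd : Odd p := hp.odd_of_ne_two hp2
  have hc := Int.four_mul_add_mul_sq_emod_eight (a := a) ((Int.odd_coe_nat p).2 hp_odd)
    ((Int.odd_coe_nat f).2 hf)
  rw [Cpl_two_eq_card_sq hp_odd (Int.odd_iff.2 (by omega)) hf hn.ne',
    factorization_two_four_mul_mul_sq hn.ne' hf]
  refine ⟨fun hn2 => ?_, fun hn2 ha5 => ?_, fun hn2 ha5 => ?_⟩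
  · rw [Nat.factorization_eq_zero_of_not_dvd hn2]
    exact ZMod.card_sq_eq_intCast_of_emod_four_eq_one (by omega)
  all_goals have hν := Nat.prime_two.factorization_pos_of_dvd hn.ne' hn2
  · exact ZMod.card_sq_eq_intCast_of_emod_eight_eq_one (by omega) (by omega)
  · exact ZMod.card_sq_eq_intCast_of_emod_eight_eq_five (by omega) (by omega)

/-- Lemma 4.2 (David–Smith), the case `ℓ = 2`: `C_p^{(2)}(a,f,n)` equals `2` if `n` is odd,
`4` if `n` is even and `a ≡ 5 (mod 8)`, and `0` otherwise. -/
theorem Cpl_at_two (p : ℕ) (hp : p.Prime) (hp2 : p ≠ 2)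
    (f : ℕ) (hf : Odd f) (hf0 : 0 < f) (n : ℕ) (hn : 0 < n)
    (a : ℤ) (ha : a % 4 = 1) :
    (¬ (2 ∣ n) → Cpl p a f n 2 = 2) ∧
    (2 ∣ n → a % 8 = 5 → Cpl p a f n 2 = 4) ∧
    (2 ∣ n → a % 8 ≠ 5 → Cpl p a f n 2 = 0) :=
  Cpl_at_two_general p hp hp2 f hf n hn a ha

end
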